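/- arXiv:2411.02846 — 3 statements merged into one kernel-verified Lean document; each statement's English description precedes it below -/
import Mathlib

section
/- Let Q : ℝⁿ → ℝ be continuous with Q(x) → -∞ as |x| → ∞, differentiable on ℝⁿ, and suppose DQ vanishes at exactly one point x₀. Then for any open set U containing x₀, sup_{ℝⁿ ∖ U} Q = sup_{∂U} Q. -/
/-- if `Q` is differentiable, `Q(x) → -∞` as `|x| → ∞`, and `DQ` vanishes
at exactly one point `x₀`, then for any open `U ∋ x₀`,
`sup_{ℝⁿ \ U} Q = sup_{∂U} Q`. -/
theorem stmt_8 {n : ℕ} (hn : 1 ≤ n) (Q : EuclideanSpace ℝ (Fin n) → ℝ)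
    (hQdiff : Differentiable ℝ Q)
    (hQinf : Filter.Tendsto Q (Filter.cocompact (EuclideanSpace ℝ (Fin n))) Filter.atBot)
    (x₀ : EuclideanSpace ℝ (Fin n))
    (hcrit : {x : EuclideanSpace ℝ (Fin n) | gradient Q x = 0} = {x₀})
    (U : Set (EuclideanSpace ℝ (Fin n))) (hU : IsOpen U) (hx₀ : x₀ ∈ U) :
    sSup (Q '' Uᶜ) = sSup (Q '' frontier U) := by
  by_cases hUuniv : U = Set.univ
  · simp [hUuniv]
  -- Uᶜ is nonempty
  obtain ⟨z, hz⟩ : Uᶜ.Nonempty := by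
    rw [Set.nonempty_compl]; exact hUuniv
  -- get a max of Q on the closed set Uᶜ
  obtain ⟨y, hyU, hymax⟩ : ∃ y ∈ Uᶜ, IsMaxOn Q Uᶜ y := by
    refine ContinuousOn.exists_isMaxOn' (hQdiff.continuous.continuousOn)
      hU.isClosed_compl hz ?_
    exact Filter.eventually_inf_principal.mpr <|
      (hQinf.eventually (Filter.eventually_le_atBot (Q z))).mono fun x hx _ => hx
  -- y is not in the interior of Uᶜ
  have hynotint : y ∉ interior Uᶜ := by
    intro hyint
    have hloc : IsLocalMax Q y :=
      hymax.isLocalMax (mem_interior_iff_mem_nhds.mp hyint)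
    have hgrad : gradient Q y = 0 := by
      have := hloc.fderiv_eq_zero
      simp [gradient, this]
    have : y = x₀ := by
      have hmem : y ∈ {x | gradient Q x = 0} := hgrad
      rw [hcrit] at hmem
      simpa using hmem
    exact hyU (this ▸ hx₀)
  -- hence y is in the frontier of U
  have hyfr : y ∈ frontier U := by
    rw [← frontier_compl]
    refine ⟨subset_closure hyU, hynotint⟩
  have hfrsub : frontier U ⊆ Uᶜ := by
    rw [hU.frontier_eq]; intro x hx; exact hx.2
  have hbdd : BddAbove (Q '' Uᶜ) := ⟨Q y, by rintro _ ⟨x, hx, rfl⟩; exact hymax hx⟩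
  have hbdd' : BddAbove (Q '' frontier U) := hbdd.mono (Set.image_mono hfrsub)
  refine le_antisymm ?_ ?_
  · refine csSup_le ⟨Q z, z, hz, rfl⟩ ?_
    rintro _ ⟨x, hx, rfl⟩
    exact le_trans (hymax hx) (le_csSup hbdd' ⟨y, hyfr, rfl⟩)
  · exact csSup_le_csSup hbdd ⟨Q y, y, hyfr, rfl⟩ (Set.image_mono hfrsub)
end

section
/- Let γ ≥ 0, α = 1/(1+γ), M > 1 and y₁ ∈ ℝⁿ with y₁ ≠ 0. Define Q(x) = -(M/(1+α))|x - M^{-1/α} y₁|^{1+α} + (1/(1+α))|x - y₁|^{1+α}. Then DQ(x) = 0 if and only if x = 0; in particular the unique critical point of the difference of the two C^{1,α} cones with vertices ỹ = M^{-1/α}y₁ and y₁ and openings M and 1 is y₀ = (M^{1/α} ỹ - y₁)/(M^{1/α} - 1) = 0. -/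
open Real InnerProductSpace

lemma hasGradientAt_norm_rpow_sub {E : Type*} [NormedAddCommGroup E] [InnerProductSpace ℝ E]
    [CompleteSpace E] (c x : E) {p : ℝ} (hp : 1 < p) :
    HasGradientAt (fun y => ‖y - c‖ ^ p) ((p * ‖x - c‖ ^ (p - 2)) • (x - c)) x := by
  rw [hasGradientAt_iff_hasFDerivAt]
  have h := (hasFDerivAt_norm_rpow (x - c) hp).comp x ((hasFDerivAt_id x).sub_const c)
  refine h.congr_fderiv ?_
  ext y
  simp [real_inner_smul_left]


/-- the difference `Q` of the two `C^{1,α}` cones of openings `M` and `1`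
with vertices `M^{-1/α} y₁` and `y₁` has exactly one critical point, namely
`y₀ = (M^{1/α}·(M^{-1/α}y₁) - y₁)/(M^{1/α} - 1) = 0`. -/
theorem stmt_9 {n : ℕ} (hn : 1 ≤ n) (γ : ℝ) (hγ : 0 ≤ γ) (α : ℝ) (hα : α = 1 / (1 + γ))
    (M : ℝ) (hM : 1 < M) (y₁ : EuclideanSpace ℝ (Fin n)) (hy₁ : y₁ ≠ 0)
    (Q : EuclideanSpace ℝ (Fin n) → ℝ)
    (hQ : ∀ x, Q x = -(M / (1 + α)) * ‖x - (M ^ (-(1 / α))) • y₁‖ ^ (1 + α)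
                    + (1 / (1 + α)) * ‖x - y₁‖ ^ (1 + α)) :
    (∀ x : EuclideanSpace ℝ (Fin n), gradient Q x = 0 ↔ x = 0) ∧
    ((M ^ (1 / α) - 1)⁻¹ • ((M ^ (1 / α)) • ((M ^ (-(1 / α))) • y₁) - y₁)
      = (0 : EuclideanSpace ℝ (Fin n))) := by
  have hα0 : 0 < α := by rw [hα]; positivity
  have hαne : α ≠ 0 := hα0.ne'
  have hp : (1:ℝ) < 1 + α := by linarith
  have h1α : (1:ℝ) + α ≠ 0 := by positivity
  have hM0 : (0:ℝ) < M := lt_trans one_pos hM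
  set a : ℝ := M ^ (-(1/α)) with ha_def
  have ha0 : 0 < a := Real.rpow_pos_of_pos hM0 _
  have hprod : M ^ (1/α) * a = 1 := by
    rw [ha_def, ← Real.rpow_add hM0]; simp
  have haα : a ^ α = M⁻¹ := by
    rw [ha_def, ← Real.rpow_mul hM0.le, show -(1/α) * α = -1 by field_simp]
    exact Real.rpow_neg_one M
  have hMα : 1 < M ^ (1/α) := by
    rw [show (1:ℝ) = M ^ (0:ℝ) by simp]
    exact (Real.rpow_lt_rpow_left_iff hM).mpr (by positivity)
  set yt : EuclideanSpace ℝ (Fin n) := a • y₁ with hyt_def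
  have hyty : yt ≠ y₁ := by
    intro h
    have h0 : (a - 1) • y₁ = 0 := by rw [sub_smul, one_smul, ← hyt_def, h, sub_self]
    rcases smul_eq_zero.mp h0 with h' | h'
    · have ha1 : a < 1 := Real.rpow_lt_one_of_one_lt_of_neg hM (neg_lt_zero.mpr (by positivity))
      have : a = 1 := by linarith [sub_eq_zero.mp h']
      linarith
    · exact hy₁ h'
  have key : ∀ x : EuclideanSpace ℝ (Fin n), HasGradientAt Q
      ((-(M * ‖x - yt‖ ^ (α - 1))) • (x - yt) + (‖x - y₁‖ ^ (α - 1)) • (x - y₁)) x := by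
    intro x
    rw [hasGradientAt_iff_hasFDerivAt]
    have h1 := ((hasGradientAt_norm_rpow_sub yt x hp).hasFDerivAt.const_mul (-(M/(1+α))))
    have h2 := ((hasGradientAt_norm_rpow_sub y₁ x hp).hasFDerivAt.const_mul (1/(1+α)))
    have h := h1.add h2
    have hQfun : Q = fun x => -(M / (1 + α)) * ‖x - yt‖ ^ (1 + α)
        + 1 / (1 + α) * ‖x - y₁‖ ^ (1 + α) := funext hQ
    rw [hQfun]
    refine h.congr_fderiv ?_
    ext v
    simp only [InnerProductSpace.toDual_apply_apply, ContinuousLinearMap.add_apply,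
      ContinuousLinearMap.coe_smul', Pi.smul_apply, inner_add_left, inner_smul_left,
      real_inner_smul_left, smul_eq_mul, RCLike.inner_apply, starRingEnd_apply, star_trivial,
      inner_neg_left]
    rw [show (1:ℝ) + α - 2 = α - 1 by ring]
    field_simp
  have hgrad : ∀ x : EuclideanSpace ℝ (Fin n), gradient Q x
      = (-(M * ‖x - yt‖ ^ (α - 1))) • (x - yt) + (‖x - y₁‖ ^ (α - 1)) • (x - y₁) :=
    fun x => (key x).gradient
  constructor
  · intro x
    rw [hgrad x]
    constructor
    · intro h
      have h' : (M * ‖x - yt‖ ^ (α - 1)) • (x - yt) = (‖x - y₁‖ ^ (α - 1)) • (x - y₁) := by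
        rw [neg_smul, neg_add_eq_zero] at h
        exact h
      by_cases hxt : x = yt
      · exfalso
        rw [hxt, sub_self, smul_zero] at h'
        rcases smul_eq_zero.mp h'.symm with h'' | h''
        · have hs : 0 < ‖yt - y₁‖ := norm_pos_iff.mpr (sub_ne_zero.mpr hyty)
          exact (Real.rpow_pos_of_pos hs _).ne' h''
        · exact hyty (sub_eq_zero.mp h'')
      · have hr : 0 < ‖x - yt‖ := norm_pos_iff.mpr (sub_ne_zero.mpr hxt)
        have hxy : x ≠ y₁ := by
          intro hh
          rw [hh, sub_self, smul_zero] at h'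
          have hr' : 0 < ‖y₁ - yt‖ := norm_pos_iff.mpr (sub_ne_zero.mpr (Ne.symm hyty))
          rcases smul_eq_zero.mp h' with h'' | h''
          · exact (mul_pos hM0 (Real.rpow_pos_of_pos hr' _)).ne' h''
          · exact hyty (sub_eq_zero.mp h'').symm
        have hs : 0 < ‖x - y₁‖ := norm_pos_iff.mpr (sub_ne_zero.mpr hxy)
        set r := ‖x - yt‖ with hr_def
        set s := ‖x - y₁‖ with hs_def
        have hnorm : M * r ^ α = s ^ α := by
          have hc := congrArg norm h'
          rw [norm_smul, norm_smul, Real.norm_eq_abs, Real.norm_eq_abs,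
            abs_of_pos (mul_pos hM0 (Real.rpow_pos_of_pos hr _)),
            abs_of_pos (Real.rpow_pos_of_pos hs _)] at hc
          calc M * r ^ α = M * r ^ (α - 1) * r := by
                rw [mul_assoc, ← Real.rpow_add_one hr.ne', show α - 1 + 1 = α by ring]
            _ = s ^ (α - 1) * s := hc
            _ = s ^ α := by rw [← Real.rpow_add_one hs.ne', show α - 1 + 1 = α by ring]
        have hsr : s = M ^ (1/α) * r := by
          have h1 : ((M * r ^ α) ^ (1/α) : ℝ) = (s ^ α) ^ (1/α) := by rw [hnorm]
          rw [Real.mul_rpow hM0.le (Real.rpow_nonneg hr.le _),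
            ← Real.rpow_mul hr.le, ← Real.rpow_mul hs.le,
            mul_one_div_cancel hαne, Real.rpow_one, Real.rpow_one] at h1
          exact h1.symm
        have hcoef : M * r ^ (α - 1) = M ^ (1/α) * s ^ (α - 1) := by
          rw [hsr, Real.mul_rpow (Real.rpow_nonneg hM0.le _) hr.le, ← mul_assoc,
            ← Real.rpow_mul hM0.le, ← Real.rpow_add hM0,
            show 1/α + 1/α * (α - 1) = 1 by field_simp; ring, Real.rpow_one]
        rw [hcoef, mul_comm (M ^ (1/α)) (s ^ (α - 1)), mul_smul] at h'
        have hvec : M ^ (1/α) • (x - yt) = x - y₁ :=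
          smul_right_injective _ (Real.rpow_pos_of_pos hs (α - 1)).ne' h'
        have hy : M ^ (1/α) • yt = y₁ := by
          rw [hyt_def, smul_smul, hprod, one_smul]
        rw [smul_sub, hy] at hvec
        have hxx : M ^ (1/α) • x = x := sub_left_inj.mp hvec
        have hz : (M ^ (1/α) - 1) • x = 0 := by
          rw [sub_smul, one_smul, hxx, sub_self]
        rcases smul_eq_zero.mp hz with h'' | h''
        · exfalso; have := sub_eq_zero.mp h''; linarith
        · exact h''
    · rintro rfl
      have hy1 : 0 < ‖y₁‖ := norm_pos_iff.mpr hy₁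
      have hnyt : ‖(0:EuclideanSpace ℝ (Fin n)) - yt‖ = a * ‖y₁‖ := by
        rw [zero_sub, norm_neg, hyt_def, norm_smul, Real.norm_eq_abs, abs_of_pos ha0]
      have hny : ‖(0:EuclideanSpace ℝ (Fin n)) - y₁‖ = ‖y₁‖ := by rw [zero_sub, norm_neg]
      have hc : M * (a * ‖y₁‖) ^ (α - 1) * a = ‖y₁‖ ^ (α - 1) := by
        rw [Real.mul_rpow ha0.le hy1.le,
          show M * (a ^ (α - 1) * ‖y₁‖ ^ (α - 1)) * a
            = M * (a ^ (α - 1) * a) * ‖y₁‖ ^ (α - 1) by ring,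
          ← Real.rpow_add_one ha0.ne', show α - 1 + 1 = α by ring, haα,
          mul_inv_cancel₀ hM0.ne', one_mul]
      have e1 : (-(M * (a * ‖y₁‖) ^ (α - 1))) • ((0:EuclideanSpace ℝ (Fin n)) - yt)
          = (‖y₁‖ ^ (α - 1)) • y₁ := by
        rw [zero_sub, neg_smul_neg, hyt_def, smul_smul, hc]
      have e2 : (‖y₁‖ ^ (α - 1)) • ((0:EuclideanSpace ℝ (Fin n)) - y₁)
          = -((‖y₁‖ ^ (α - 1)) • y₁) := by rw [zero_sub, smul_neg]
      rw [hnyt, hny, e1, e2, add_neg_cancel]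
  · rw [smul_smul, hprod, one_smul, sub_self, smul_zero]
end

section
/- (Vitali-type (θ,Θ)-covering lemma) Let E ⊆ F ⊆ B₁ ⊂ ℝⁿ be measurable sets and 0 < θ < Θ < 1 such that (i) |E| > θ|B₁|, and (ii) for every ball B ⊆ B₁, |B ∩ E| ≥ θ|B| implies |B ∩ F| ≥ Θ|B|. Then |B₁ ∖ F| ≤ (1 - (Θ-θ)/5ⁿ) |B₁ ∖ E|. -/
open MeasureTheory Metric Filter Set

private lemma select_ball {n : ℕ} (hn : 1 ≤ n) (E : Set (EuclideanSpace ℝ (Fin n)))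
    (hEsub : E ⊆ ball (0 : EuclideanSpace ℝ (Fin n)) 1)
    {θ : ℝ} (hθ : 0 < θ)
    (hE : ENNReal.ofReal θ * volume (ball (0 : EuclideanSpace ℝ (Fin n)) 1) < volume E)
    (x : EuclideanSpace ℝ (Fin n)) (hx : x ∈ ball (0 : EuclideanSpace ℝ (Fin n)) 1)
    (hxd : Tendsto (fun ρ => volume (E ∩ closedBall x ρ) / volume (closedBall x ρ))
      (nhdsWithin 0 (Set.Ioi 0)) (nhds 0)) :
    ∃ c r, 0 < r ∧ r ≤ 1 ∧ x ∈ ball c r ∧ ball c r ⊆ ball (0 : EuclideanSpace ℝ (Fin n)) 1 ∧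
      volume (ball c r ∩ E) = ENNReal.ofReal θ * volume (ball c r) := by
  haveI : Nonempty (Fin n) := Fin.pos_iff_nonempty.mp hn
  haveI : Nontrivial (EuclideanSpace ℝ (Fin n)) :=
    Module.nontrivial_of_finrank_pos (R := ℝ) (by rw [finrank_euclideanSpace_fin]; omega)
  have hxn : ‖x‖ < 1 := by simpa [mem_ball, dist_eq_norm] using hx
  set v := volume (ball (0 : EuclideanSpace ℝ (Fin n)) 1) with hv
  have hvt : v ≠ ⊤ := measure_ball_lt_top.ne
  have hd : Module.finrank ℝ (EuclideanSpace ℝ (Fin n)) = n := finrank_euclideanSpace_fin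
  set B : ℝ → Set (EuclideanSpace ℝ (Fin n)) := fun t => ball ((1 - t) • x) t with hB
  have hBmono : ∀ {s t : ℝ}, s ≤ t → B s ⊆ B t := by
    intro s t hst y hy
    rw [hB, mem_ball] at hy ⊢
    have hdist : dist ((1 - s) • x) ((1 - t) • x) = (t - s) * ‖x‖ := by
      rw [dist_eq_norm, ← sub_smul, norm_smul, Real.norm_eq_abs]
      rw [show (1 - s) - (1 - t) = t - s by ring, abs_of_nonneg (by linarith)]
    calc dist y ((1 - t) • x) ≤ dist y ((1 - s) • x) + dist ((1 - s) • x) ((1 - t) • x) :=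
          dist_triangle _ _ _
      _ < s + (t - s) * ‖x‖ := by rw [hdist]; exact add_lt_add_left hy _
      _ ≤ s + (t - s) * 1 := by
          have := mul_le_mul_of_nonneg_left hxn.le (sub_nonneg.2 hst); linarith
      _ = t := by ring
  have hBsub : ∀ {t : ℝ}, t ≤ 1 → B t ⊆ ball (0 : EuclideanSpace ℝ (Fin n)) 1 := by
    intro t ht y hy
    rw [hB, mem_ball] at hy
    rw [mem_ball_zero_iff]
    have h1 : ‖y‖ ≤ ‖y - (1 - t) • x‖ + ‖(1 - t) • x‖ := by
      simpa using norm_add_le (y - (1 - t) • x) ((1 - t) • x)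
    have h2 : ‖y - (1 - t) • x‖ < t := by rwa [← dist_eq_norm]
    have h3 : ‖(1 - t) • x‖ ≤ (1 - t) * 1 := by
      rw [norm_smul, Real.norm_eq_abs, abs_of_nonneg (by linarith)]
      exact mul_le_mul_of_nonneg_left hxn.le (by linarith)
    linarith
  have hBx : ∀ {t : ℝ}, 0 < t → x ∈ B t := by
    intro t ht
    rw [hB, mem_ball, dist_eq_norm]
    have heq : x - (1 - t) • x = t • x := by
      rw [sub_smul, one_smul, sub_sub_cancel]
    rw [heq, norm_smul, Real.norm_eq_abs, abs_of_nonneg ht.le]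
    calc t * ‖x‖ < t * 1 := by exact mul_lt_mul_of_pos_left hxn ht
      _ = t := mul_one t
  have hBx2 : ∀ {t : ℝ}, 0 < t → B t ⊆ ball x (2 * t) := by
    intro t ht y hy
    rw [hB, mem_ball] at hy
    rw [mem_ball]
    have hdist : dist ((1 - t) • x) x = t * ‖x‖ := by
      rw [dist_eq_norm, ← neg_sub x, norm_neg, sub_smul, one_smul, sub_sub_cancel,
        norm_smul, Real.norm_eq_abs, abs_of_nonneg ht.le]
    calc dist y x ≤ dist y ((1 - t) • x) + dist ((1 - t) • x) x := dist_triangle _ _ _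
      _ < t + t * ‖x‖ := by rw [hdist]; exact add_lt_add_left hy _
      _ ≤ t + t * 1 := by nlinarith
      _ = 2 * t := by ring
  have hBvol : ∀ {t : ℝ}, 0 ≤ t → volume (B t) = ENNReal.ofReal (t ^ n) * v := by
    intro t ht
    rw [hB]
    simp only
    rw [Measure.addHaar_ball volume _ ht, hd, hv]
  have hB1 : B 1 = ball (0 : EuclideanSpace ℝ (Fin n)) 1 := by
    rw [hB]; simp
  have hEBfin : ∀ t : ℝ, volume (E ∩ B t) ≠ ⊤ := fun t =>
    ne_top_of_le_ne_top measure_ball_lt_top.ne (measure_mono inter_subset_right)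
  set φ : ℝ → ℝ := fun t => (volume (E ∩ B t)).toReal with hφ
  set W : ℝ → ℝ := fun t => t ^ n * v.toReal with hW
  have hWcont : Continuous W := (continuous_pow n).mul continuous_const
  have hWvol : ∀ {t : ℝ}, 0 ≤ t → (volume (B t)).toReal = W t := by
    intro t ht
    rw [hBvol ht, ENNReal.toReal_mul, ENNReal.toReal_ofReal (pow_nonneg ht n)]
  have hmono : ∀ {s t : ℝ}, s ≤ t → φ s ≤ φ t := by
    intro s t hst
    exact ENNReal.toReal_mono (hEBfin t) (measure_mono (inter_subset_inter_right _ (hBmono hst)))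
  have hlip : ∀ {s t : ℝ}, 0 ≤ s → s ≤ t → φ t - φ s ≤ W t - W s := by
    intro s t hs hst
    have key : volume (E ∩ B t) + volume (B s) ≤ volume (E ∩ B s) + volume (B t) := by
      have h1 : volume (E ∩ B t) ≤ volume (E ∩ B s) + volume (B t \ B s) := by
        refine le_trans (measure_mono ?_) (measure_union_le _ _)
        rintro y ⟨hyE, hyB⟩
        by_cases h : y ∈ B s
        · exact Or.inl ⟨hyE, h⟩
        · exact Or.inr ⟨hyB, h⟩
      have h2 : volume (B t \ B s) + volume (B s) = volume (B t) := by
        rw [← measure_union (disjoint_sdiff_self_left) measurableSet_ball,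
          Set.diff_union_of_subset (hBmono hst)]
      calc volume (E ∩ B t) + volume (B s)
          ≤ (volume (E ∩ B s) + volume (B t \ B s)) + volume (B s) := add_le_add_left h1 _
        _ = volume (E ∩ B s) + (volume (B t \ B s) + volume (B s)) := add_assoc _ _ _
        _ = volume (E ∩ B s) + volume (B t) := by rw [h2]
    have hBfin : ∀ u : ℝ, volume (B u) ≠ ⊤ := fun u => measure_ball_lt_top.ne
    have := ENNReal.toReal_mono (by
        exact ENNReal.add_ne_top.2 ⟨hEBfin s, hBfin t⟩) key
    rw [ENNReal.toReal_add (hEBfin t) (hBfin s), ENNReal.toReal_add (hEBfin s) (hBfin t)] at this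
    rw [hWvol hs, hWvol (hs.trans hst)] at *
    have e1 : (volume (E ∩ B t)).toReal = φ t := rfl
    have e2 : (volume (E ∩ B s)).toReal = φ s := rfl
    rw [e1, e2] at this
    linarith
  have habs : ∀ {s t : ℝ}, 0 ≤ s → 0 ≤ t → |φ s - φ t| ≤ |W s - W t| := by
    have base : ∀ {s t : ℝ}, 0 ≤ s → s ≤ t → |φ s - φ t| ≤ |W s - W t| := by
      intro s t hs hst
      have h1 := hmono hst
      have h2 := hlip hs hst
      have h3 : W s ≤ W t := by linarith
      rw [abs_of_nonpos (by linarith), abs_of_nonpos (by linarith)]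
      linarith
    intro s t hs ht
    rcases le_total s t with h | h
    · exact base hs h
    · rw [abs_sub_comm (φ s), abs_sub_comm (W s)]; exact base ht h
  -- find the starting radius t₀
  set ε : ℝ := θ / 2 ^ (n + 1) with hε
  have hεpos : 0 < ε := by positivity
  have hev1 : ∀ᶠ ρ in nhdsWithin (0:ℝ) (Set.Ioi 0),
      volume (E ∩ closedBall x ρ) / volume (closedBall x ρ) < ENNReal.ofReal ε :=
    hxd.eventually_lt_const (by simpa using ENNReal.ofReal_pos.2 hεpos)
  have hev2 : ∀ᶠ ρ in nhdsWithin (0:ℝ) (Set.Ioi 0), ρ < 2 :=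
    eventually_nhdsWithin_of_eventually_nhds (eventually_lt_nhds two_pos)
  have hev3 : ∀ᶠ ρ in nhdsWithin (0:ℝ) (Set.Ioi 0), ρ ∈ Set.Ioi (0:ℝ) :=
    eventually_mem_nhdsWithin
  obtain ⟨r0, ⟨hr0ε, hr0two⟩, hr0pos⟩ := ((hev1.and hev2).and hev3).exists
  rw [Set.mem_Ioi] at hr0pos
  set t₀ : ℝ := r0 / 2 with ht₀def
  have ht₀pos : 0 < t₀ := by positivity
  have ht₀le : t₀ ≤ 1 := by rw [ht₀def]; linarith
  have hr0t₀ : r0 = 2 * t₀ := by rw [ht₀def]; ring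
  have hstep : volume (E ∩ B t₀) < ENNReal.ofReal θ * volume (B t₀) := by
    have hcb0 : volume (closedBall x r0) ≠ 0 := (measure_closedBall_pos _ _ hr0pos).ne'
    have hcbt : volume (closedBall x r0) ≠ ⊤ := measure_closedBall_lt_top.ne
    have h1 : volume (E ∩ closedBall x r0) < ENNReal.ofReal ε * volume (closedBall x r0) :=
      (ENNReal.div_lt_iff (Or.inl hcb0) (Or.inl hcbt)).mp hr0ε
    have hsubcb : B t₀ ⊆ closedBall x r0 := by
      refine (hBx2 ht₀pos).trans ?_
      rw [hr0t₀]
      exact ball_subset_closedBall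
    have hcbvol : volume (closedBall x r0) = ENNReal.ofReal (r0 ^ n) * v := by
      rw [Measure.addHaar_closedBall' volume _ hr0pos.le, hd,
        Measure.addHaar_closedBall_eq_addHaar_ball volume (0 : EuclideanSpace ℝ (Fin n)) 1, hv]
    calc volume (E ∩ B t₀) ≤ volume (E ∩ closedBall x r0) :=
          measure_mono (inter_subset_inter_right _ hsubcb)
      _ < ENNReal.ofReal ε * volume (closedBall x r0) := h1
      _ = ENNReal.ofReal (ε * r0 ^ n) * v := by
          rw [hcbvol, ← mul_assoc, ← ENNReal.ofReal_mul hεpos.le]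
      _ ≤ ENNReal.ofReal (θ * t₀ ^ n) * v := by
          refine mul_le_mul_left (ENNReal.ofReal_le_ofReal ?_) v
          have ht₀n : (0:ℝ) < t₀ ^ n := pow_pos ht₀pos n
          have hεr : ε * r0 ^ n = (θ / 2) * t₀ ^ n := by
            rw [hr0t₀, mul_pow, hε, pow_succ]
            field_simp
          rw [hεr]
          nlinarith
      _ = ENNReal.ofReal θ * volume (B t₀) := by
          rw [hBvol ht₀pos.le, ENNReal.ofReal_mul hθ.le, mul_assoc]
  have hend : ENNReal.ofReal θ * volume (B 1) < volume (E ∩ B 1) := by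
    rw [hB1, Set.inter_eq_left.2 hEsub]
    exact hE
  -- intermediate value theorem
  set f : ℝ → ℝ := fun t => φ t - θ * W t with hf
  have hφc : ContinuousOn φ (Set.Icc t₀ 1) := by
    rw [Metric.continuousOn_iff]
    intro b hb ε' hε'
    obtain ⟨δ, hδ, hδ'⟩ := Metric.continuous_iff.mp hWcont b ε' hε'
    refine ⟨δ, hδ, fun a ha hab => ?_⟩
    have hWab := hδ' a hab
    have h0a : (0:ℝ) ≤ a := le_trans ht₀pos.le ha.1
    have h0b : (0:ℝ) ≤ b := le_trans ht₀pos.le hb.1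
    rw [Real.dist_eq] at hWab ⊢
    exact lt_of_le_of_lt (habs h0a h0b) hWab
  have hfc : ContinuousOn f (Set.Icc t₀ 1) :=
    hφc.sub ((continuous_const.mul hWcont).continuousOn)
  have hRfin : ∀ t : ℝ, ENNReal.ofReal θ * volume (B t) ≠ ⊤ :=
    fun t => ENNReal.mul_ne_top ENNReal.ofReal_ne_top measure_ball_lt_top.ne
  have htoR : ∀ {t : ℝ}, 0 ≤ t → (ENNReal.ofReal θ * volume (B t)).toReal = θ * W t := by
    intro t ht
    rw [ENNReal.toReal_mul, ENNReal.toReal_ofReal hθ.le, hWvol ht]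
  have hft₀ : f t₀ < 0 := by
    have := ENNReal.toReal_strict_mono (hRfin t₀) hstep
    rw [htoR ht₀pos.le] at this
    have e1 : (volume (E ∩ B t₀)).toReal = φ t₀ := rfl
    rw [e1] at this
    simp only [hf]
    linarith
  have hf1 : 0 < f 1 := by
    have := ENNReal.toReal_strict_mono (hEBfin 1) hend
    rw [htoR zero_le_one] at this
    have e1 : (volume (E ∩ B 1)).toReal = φ 1 := rfl
    rw [e1] at this
    simp only [hf]
    linarith
  have h0mem : (0:ℝ) ∈ Set.Icc (f t₀) (f 1) := ⟨hft₀.le, hf1.le⟩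
  obtain ⟨t, htmem, hft⟩ := intermediate_value_Icc ht₀le hfc h0mem
  have htpos : 0 < t := lt_of_lt_of_le ht₀pos htmem.1
  refine ⟨(1 - t) • x, t, htpos, htmem.2, hBx htpos, hBsub htmem.2, ?_⟩
  have hφt : φ t = θ * W t := by
    simp only [hf] at hft
    linarith
  rw [Set.inter_comm]
  apply (ENNReal.toReal_eq_toReal_iff' (hEBfin t) (hRfin t)).mp
  rw [htoR htpos.le]
  exact hφt

/-- Vitali-type `(θ,Θ)` covering lemma. -/
theorem stmt_11 {n : ℕ} (hn : 1 ≤ n) (E F : Set (EuclideanSpace ℝ (Fin n)))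
    (hEmeas : MeasurableSet E) (hFmeas : MeasurableSet F)
    (hEF : E ⊆ F) (hF : F ⊆ Metric.ball (0 : EuclideanSpace ℝ (Fin n)) 1)
    (θ Θ : ℝ) (hθ : 0 < θ) (hΘ : θ < Θ) (hΘ1 : Θ < 1)
    (hE : ENNReal.ofReal θ * volume (Metric.ball (0 : EuclideanSpace ℝ (Fin n)) 1) < volume E)
    (hball : ∀ (c : EuclideanSpace ℝ (Fin n)) (r : ℝ), 0 < r →
      Metric.ball c r ⊆ Metric.ball (0 : EuclideanSpace ℝ (Fin n)) 1 →
      ENNReal.ofReal θ * volume (Metric.ball c r) ≤ volume (Metric.ball c r ∩ E) →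
      ENNReal.ofReal Θ * volume (Metric.ball c r) ≤ volume (Metric.ball c r ∩ F)) :
    volume (Metric.ball (0 : EuclideanSpace ℝ (Fin n)) 1 \ F)
      ≤ ENNReal.ofReal (1 - (Θ - θ) / 5 ^ n)
        * volume (Metric.ball (0 : EuclideanSpace ℝ (Fin n)) 1 \ E) := by
  classical
  haveI : Nonempty (Fin n) := Fin.pos_iff_nonempty.mp hn
  haveI : Nontrivial (EuclideanSpace ℝ (Fin n)) :=
    Module.nontrivial_of_finrank_pos (R := ℝ) (by rw [finrank_euclideanSpace_fin]; omega)
  have hd : Module.finrank ℝ (EuclideanSpace ℝ (Fin n)) = n := finrank_euclideanSpace_fin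
  set B₁ := ball (0 : EuclideanSpace ℝ (Fin n)) 1 with hB₁
  have hEsub : E ⊆ B₁ := fun y hy => hF (hEF hy)
  -- density points
  have hae := Besicovitch.ae_tendsto_measure_inter_div_of_measurableSet
    (volume : Measure (EuclideanSpace ℝ (Fin n))) hEmeas
  set D : Set (EuclideanSpace ℝ (Fin n)) := {y | y ∈ B₁ \ E ∧
    Tendsto (fun ρ => volume (E ∩ closedBall y ρ) / volume (closedBall y ρ))
      (nhdsWithin 0 (Set.Ioi 0)) (nhds 0)} with hD
  have hnull : volume ((B₁ \ E) \ D) = 0 := by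
    rw [measure_eq_zero_iff_ae_notMem]
    filter_upwards [hae] with y hy
    rintro ⟨hy1, hy2⟩
    refine hy2 ⟨hy1, ?_⟩
    have hind : E.indicator (1 : EuclideanSpace ℝ (Fin n) → ENNReal) y = 0 :=
      Set.indicator_of_notMem hy1.2 _
    rw [hind] at hy
    exact hy
  have hDsup : volume (B₁ \ E) ≤ volume D := by
    calc volume (B₁ \ E) ≤ volume (D ∪ ((B₁ \ E) \ D)) := by
          refine measure_mono fun y hy => ?_
          by_cases h : y ∈ D
          · exact Or.inl h
          · exact Or.inr ⟨hy, h⟩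
      _ ≤ volume D + volume ((B₁ \ E) \ D) := measure_union_le _ _
      _ = volume D := by rw [hnull, add_zero]
  -- select balls
  have hsel : ∀ y ∈ D, ∃ c r, 0 < r ∧ r ≤ 1 ∧ y ∈ ball c r ∧ ball c r ⊆ B₁ ∧
      volume (ball c r ∩ E) = ENNReal.ofReal θ * volume (ball c r) :=
    fun y hy => select_ball hn E hEsub hθ hE y hy.1.1 hy.2
  choose! c r hrpos hrle hmem hsub heq using hsel
  -- Vitali covering
  obtain ⟨u, huD, hdisj, hcover⟩ :=
    Vitali.exists_disjoint_subfamily_covering_enlargement_closedBall D c r 1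
      (fun a ha => hrle a ha) 5 (by norm_num)
  have hballdisj : u.PairwiseDisjoint fun b => ball (c b) (r b) :=
    hdisj.mono fun i => ball_subset_closedBall
  have hucnt : u.Countable :=
    hballdisj.countable_of_isOpen (fun i _ => isOpen_ball)
      (fun i hi => Metric.nonempty_ball.2 (hrpos i (huD hi)))
  set S := ∑' b : u, volume (ball (c b) (r b)) with hS
  -- H1 : the enlarged balls cover B₁ \ E up to null sets
  have H1 : volume (B₁ \ E) ≤ ENNReal.ofReal ((5:ℝ) ^ n) * S := by
    have hDcov : D ⊆ ⋃ b ∈ u, closedBall (c b) (5 * r b) := by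
      intro y hy
      obtain ⟨b, hbu, hb⟩ := hcover y hy
      exact Set.mem_biUnion hbu (hb (ball_subset_closedBall (hmem y hy)))
    calc volume (B₁ \ E) ≤ volume D := hDsup
      _ ≤ volume (⋃ b ∈ u, closedBall (c b) (5 * r b)) := measure_mono hDcov
      _ ≤ ∑' b : u, volume (closedBall (c b) (5 * r b)) := measure_biUnion_le volume hucnt _
      _ = ∑' b : u, ENNReal.ofReal ((5:ℝ) ^ n) * volume (ball (c b) (r b)) := by
          refine tsum_congr fun b => ?_
          have hb5 : volume (closedBall (c b) (5 * r b))
              = ENNReal.ofReal ((5:ℝ) ^ n) * volume (closedBall (0 : EuclideanSpace ℝ (Fin n)) (r b)) := by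
            rw [Measure.addHaar_closedBall_mul volume _ (by norm_num : (0:ℝ) ≤ 5)
              (hrpos b (huD b.2)).le, hd]
          rw [hb5, ← Measure.addHaar_closedBall_center volume (c b) (r b),
            Measure.addHaar_closedBall_eq_addHaar_ball]
      _ = ENNReal.ofReal ((5:ℝ) ^ n) * S := ENNReal.tsum_mul_left
  -- H2 : each ball contains a proportion (Θ - θ) of F \ E
  have hperball : ∀ b ∈ u, ENNReal.ofReal (Θ - θ) * volume (ball (c b) (r b))
      ≤ volume (ball (c b) (r b) ∩ (F \ E)) := by
    intro b hb
    have hbD : b ∈ D := huD hb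
    have h1 : volume (ball (c b) (r b) ∩ E) = ENNReal.ofReal θ * volume (ball (c b) (r b)) :=
      heq b hbD
    have h2 : ENNReal.ofReal Θ * volume (ball (c b) (r b)) ≤ volume (ball (c b) (r b) ∩ F) :=
      hball (c b) (r b) (hrpos b hbD) (hsub b hbD) h1.ge
    have hdiffeq : ball (c b) (r b) ∩ (F \ E)
        = (ball (c b) (r b) ∩ F) \ (ball (c b) (r b) ∩ E) := by
      ext y
      simp only [Set.mem_inter_iff, Set.mem_diff]
      tauto
    have hfin : volume (ball (c b) (r b) ∩ E) ≠ ⊤ :=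
      ne_top_of_le_ne_top measure_ball_lt_top.ne (measure_mono Set.inter_subset_left)
    rw [hdiffeq, measure_diff (Set.inter_subset_inter_right _ hEF)
      (measurableSet_ball.inter hEmeas).nullMeasurableSet hfin, h1]
    apply ENNReal.le_sub_of_add_le_right
      (ENNReal.mul_ne_top ENNReal.ofReal_ne_top measure_ball_lt_top.ne)
    calc ENNReal.ofReal (Θ - θ) * volume (ball (c b) (r b))
          + ENNReal.ofReal θ * volume (ball (c b) (r b))
        = ENNReal.ofReal Θ * volume (ball (c b) (r b)) := by
          rw [← add_mul, ← ENNReal.ofReal_add (by linarith) hθ.le, sub_add_cancel]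
      _ ≤ volume (ball (c b) (r b) ∩ F) := h2
  have H2 : ENNReal.ofReal (Θ - θ) * S ≤ volume (F \ E) := by
    calc ENNReal.ofReal (Θ - θ) * S
        = ∑' b : u, ENNReal.ofReal (Θ - θ) * volume (ball (c b) (r b)) :=
          ENNReal.tsum_mul_left.symm
      _ ≤ ∑' b : u, volume (ball (c b) (r b) ∩ (F \ E)) :=
          ENNReal.tsum_le_tsum fun b => hperball b b.2
      _ = volume (⋃ b ∈ u, ball (c b) (r b) ∩ (F \ E)) := by
          refine (measure_biUnion hucnt ?_ fun b hb => measurableSet_ball.inter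
            (hFmeas.diff hEmeas)).symm
          exact hballdisj.mono fun i => Set.inter_subset_left
      _ ≤ volume (F \ E) := by
          refine measure_mono ?_
          simp only [Set.iUnion_subset_iff]
          exact fun b hb => Set.inter_subset_right
  -- combine
  have hq0 : (0:ℝ) ≤ (Θ - θ) / 5 ^ n := div_nonneg (by linarith) (by positivity)
  have key : ENNReal.ofReal ((Θ - θ) / 5 ^ n) * volume (B₁ \ E) ≤ volume (F \ E) := by
    calc ENNReal.ofReal ((Θ - θ) / 5 ^ n) * volume (B₁ \ E)
        ≤ ENNReal.ofReal ((Θ - θ) / 5 ^ n) * (ENNReal.ofReal ((5:ℝ) ^ n) * S) :=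
          mul_le_mul_right H1 _
      _ = ENNReal.ofReal ((Θ - θ) / 5 ^ n * 5 ^ n) * S := by
          rw [← mul_assoc, ← ENNReal.ofReal_mul hq0]
      _ = ENNReal.ofReal (Θ - θ) * S := by
          rw [div_mul_cancel₀ _ (by positivity : ((5:ℝ) ^ n) ≠ 0)]
      _ ≤ volume (F \ E) := H2
  have hsplit : volume (B₁ \ F) + volume (F \ E) = volume (B₁ \ E) := by
    rw [← measure_union (Set.disjoint_left.mpr fun y hy h2 => hy.2 h2.1)
      (hFmeas.diff hEmeas)]
    congr 1
    ext y
    constructor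
    · rintro (⟨h1, h2⟩ | ⟨h1, h2⟩)
      · exact ⟨h1, fun h => h2 (hEF h)⟩
      · exact ⟨hF h1, h2⟩
    · rintro ⟨h1, h2⟩
      by_cases h : y ∈ F
      · exact Or.inr ⟨h, h2⟩
      · exact Or.inl ⟨h1, h⟩
  have hBEfin : volume (B₁ \ E) ≠ ⊤ :=
    ne_top_of_le_ne_top measure_ball_lt_top.ne (measure_mono Set.diff_subset)
  rw [ENNReal.ofReal_sub _ hq0, ENNReal.ofReal_one,
    ENNReal.sub_mul fun _ _ => hBEfin, one_mul]
  apply ENNReal.le_sub_of_add_le_right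
    (ENNReal.mul_ne_top ENNReal.ofReal_ne_top hBEfin)
  calc volume (B₁ \ F) + ENNReal.ofReal ((Θ - θ) / 5 ^ n) * volume (B₁ \ E)
      ≤ volume (B₁ \ F) + volume (F \ E) := add_le_add_right key _
    _ = volume (B₁ \ E) := hsplit
end
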